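/- The amended Blanchet protocol achieves its authentication goal: for every bundle Υ = (Θ,→) that is a run of the amended protocol, all messages a,b of sort A, s of sort S, d of sort D, and every strand z ∈ Dom(Θ), if htin(Θ,z,2,resp(a,b,s,d)), non(Θ,a⁻¹), and non(Θ,b⁻¹) hold, then there exist d₀ of sort D and z₀ ∈ Dom(Θ) with htin(Θ,z₀,1,init(a,b,s,d₀)); in particular the initiator and responder strands agree on the keys a and b and the symmetric key s. -/

import Mathlib

/-- The four sorts of the Simple Crypto Algebra signature. -/
inductive MSort : Type
  | top | A | S | D
deriving DecidableEq

/-- Message terms over a set `V` of variables (the free order-sorted algebra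
in canonical form; ground messages are `MTerm Empty`). -/
inductive MTerm (V : Type) : Type
  | var (v : V)
  | akey (i : ℕ) (b : Bool)   -- asymmetric key constants: `a_i` when `b = false`, `b_i` when `b = true`
  | skey (i : ℕ)              -- symmetric key constants `s_i`
  | data (i : ℕ)              -- data constants
  | invk (t : MTerm V)        -- key inverse (kept only where it cannot be reduced)
  | pair (t₀ t₁ : MTerm V)
  | enc (t k : MTerm V)

namespace MTerm

/-- The sort of a term (`none` when ill-sorted), given variable sorts `so`. -/
def srt {V : Type} (so : V → MSort) : MTerm V → Option MSort
  | var v => some (so v)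
  | akey _ _ => some .A
  | skey _ => some .S
  | data _ => some .D
  | invk t => match t.srt so with
      | some .A => some .A
      | some .S => some .S
      | _ => none
  | pair t₀ t₁ => match t₀.srt so, t₁.srt so with
      | some _, some _ => some .top
      | _, _ => none
  | enc t k => match t.srt so, k.srt so with
      | some _, some .A => some .top
      | some _, some .S => some .top
      | _, _ => none

/-- The key-inverse operation on canonical terms. -/
def invOp {V : Type} (so : V → MSort) : MTerm V → MTerm V
  | var v => if so v = .S then var v else invk (var v)
  | akey i b => akey i (!b)
  | skey i => skey i
  | invk t => t
  | t => invk t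

/-- Apply a substitution (an algebra homomorphism determined by its action on
variables), normalizing inverses; `so'` gives the sorts of target variables. -/
def subst {V W : Type} (so' : W → MSort) (σ : V → MTerm W) : MTerm V → MTerm W
  | var v => σ v
  | akey i b => akey i b
  | skey i => skey i
  | data i => data i
  | invk t => invOp so' (t.subst so' σ)
  | pair t₀ t₁ => pair (t₀.subst so' σ) (t₁.subst so' σ)
  | enc t k => enc (t.subst so' σ) (k.subst so' σ)

end MTerm

/-- Subsort relation: every sort is ≤ itself and ≤ ⊤. -/
def SLe (s₁ s₂ : MSort) : Prop := s₁ = s₂ ∨ s₂ = .top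

/-- `t` is a message of sort `s` (up to subsorting). -/
def HasSort {V : Type} (so : V → MSort) (t : MTerm V) (s : MSort) : Prop :=
  ∃ s', t.srt so = some s' ∧ SLe s' s

def WellSorted {V : Type} (so : V → MSort) (t : MTerm V) : Prop :=
  (t.srt so).isSome = true

/-- Atoms are the messages of sort A, S or D. -/
def IsAtomM {V : Type} (so : V → MSort) (t : MTerm V) : Prop :=
  t.srt so = some .A ∨ t.srt so = some .S ∨ t.srt so = some .D

/-- Sorting of ground (variable-free) terms. -/
def gSo : Empty → MSort := fun e => nomatch e

/-- Ground messages: the initial algebra. -/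
abbrev Msg := MTerm Empty

/-- The carried-by relation `t₀ ⊑ t₁`. -/
inductive Carries {V : Type} : MTerm V → MTerm V → Prop
  | refl (t) : Carries t t
  | pairL {t t₀ t₁} : Carries t t₀ → Carries t (.pair t₀ t₁)
  | pairR {t t₀ t₁} : Carries t t₁ → Carries t (.pair t₀ t₁)
  | encP {t t₀ k} : Carries t t₀ → Carries t (.enc t₀ k)
/-- Events: transmission `+t` or reception `−t`. -/
inductive EvtT (V : Type) : Type
  | send (t : MTerm V)
  | recv (t : MTerm V)

namespace EvtT

def msg {V : Type} : EvtT V → MTerm V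
  | send t => t
  | recv t => t

def IsSend {V : Type} : EvtT V → Prop
  | send _ => True
  | recv _ => False

def IsRecv {V : Type} : EvtT V → Prop
  | send _ => False
  | recv _ => True

def subst {V W : Type} (so' : W → MSort) (σ : V → MTerm W) : EvtT V → EvtT W
  | send t => send (t.subst so' σ)
  | recv t => recv (t.subst so' σ)

end EvtT

/-- A default event (used only for out-of-range indexing). -/
def dEvt {V : Type} : EvtT V := .send (.data 0)

/-- A strand space: a finite non-empty sequence of traces (finite non-empty
sequences of events); strands are indices into the sequence. -/
structure SSpaceT (V : Type) where
  tr : List (List (EvtT V))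
  nonnil : tr ≠ []
  ne : ∀ C ∈ tr, C ≠ []

namespace SSpaceT

variable {V : Type}

/-- The trace of strand `s`. -/
def trace (Θ : SSpaceT V) (s : ℕ) : List (EvtT V) := Θ.tr.getD s []

/-- `s` is a strand of `Θ`, i.e. a member of `Dom(Θ)`. -/
def IsStrand (Θ : SSpaceT V) (s : ℕ) : Prop := s < Θ.tr.length

/-- `n = (s, i)` is a node of `Θ`. -/
def IsNode (Θ : SSpaceT V) (n : ℕ × ℕ) : Prop :=
  n.1 < Θ.tr.length ∧ n.2 < (Θ.trace n.1).length

/-- The event at node `n`. -/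
def evt (Θ : SSpaceT V) (n : ℕ × ℕ) : EvtT V := (Θ.trace n.1).getD n.2 dEvt

end SSpaceT

/-- `t` originates in trace `C` at index `i`. -/
def OrigAt {V : Type} (C : List (EvtT V)) (t : MTerm V) (i : ℕ) : Prop :=
  i < C.length ∧ (C.getD i dEvt).IsSend ∧ Carries t (C.getD i dEvt).msg ∧
    ∀ j < i, ¬ Carries t (C.getD j dEvt).msg

/-- `t` is non-originating in `Θ`. -/
def SSpaceT.Non {V : Type} (Θ : SSpaceT V) (t : MTerm V) : Prop :=
  ∀ s, Θ.IsStrand s → ∀ i, ¬ OrigAt (Θ.trace s) t i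

/-- `t` uniquely originates in `Θ` at node `n`. -/
def SSpaceT.Uniq {V : Type} (Θ : SSpaceT V) (t : MTerm V) (n : ℕ × ℕ) : Prop :=
  Θ.IsStrand n.1 ∧ OrigAt (Θ.trace n.1) t n.2 ∧
    ∀ s i, Θ.IsStrand s → OrigAt (Θ.trace s) t i → s = n.1 ∧ i = n.2

/-- Strand succession edges `(s, i) ⇒ (s, i+1)`. -/
def SuccEdge {V : Type} (Θ : SSpaceT V) (n₀ n₁ : ℕ × ℕ) : Prop :=
  n₀.1 = n₁.1 ∧ n₁.2 = n₀.2 + 1 ∧ Θ.IsNode n₁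

/-- A bundle: a ground strand space together with communication edges forming,
with the strand-succession edges, a finite directed acyclic graph in which
every reception has a unique matching transmission. -/
structure Bundle where
  Θ : SSpaceT Empty
  comm : (ℕ × ℕ) → (ℕ × ℕ) → Prop
  comm_nodes : ∀ n₀ n₁, comm n₀ n₁ → Θ.IsNode n₀ ∧ Θ.IsNode n₁
  comm_evt : ∀ n₀ n₁, comm n₀ n₁ → ∃ t, Θ.evt n₀ = .send t ∧ Θ.evt n₁ = .recv t
  comm_uniq : ∀ n₁, Θ.IsNode n₁ → (Θ.evt n₁).IsRecv → ∃! n₀, comm n₀ n₁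
  acyclic : ∀ n, ¬ Relation.TransGen (fun m₀ m₁ => SuccEdge Θ m₀ m₁ ∨ comm m₀ m₁) n n

/-- The edge relation of a bundle. -/
def Bundle.edge (Υ : Bundle) (n₀ n₁ : ℕ × ℕ) : Prop :=
  SuccEdge Υ.Θ n₀ n₁ ∨ Υ.comm n₀ n₁

/-- The precedes relation `≺` of a bundle: the transitive closure of the edges. -/
def Bundle.prec (Υ : Bundle) : (ℕ × ℕ) → (ℕ × ℕ) → Prop :=
  Relation.TransGen Υ.edge
/-- A role item `r(C, N, U)`: a trace together with non-origination and
unique-origination assumption sequences of the same length. -/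
structure RoleItemT (V : Type) where
  C : List (EvtT V)
  N : List (Set (MTerm V))
  U : List (Set (MTerm V))
  ne : C ≠ []
  lenN : N.length = C.length
  lenU : U.length = C.length

/-- Apply a substitution to a role item. -/
def RoleItemT.subst {V W : Type} (so' : W → MSort) (σ : V → MTerm W)
    (r : RoleItemT V) : RoleItemT W where
  C := r.C.map (EvtT.subst so' σ)
  N := r.N.map (fun X => (MTerm.subst so' σ) '' X)
  U := r.U.map (fun X => (MTerm.subst so' σ) '' X)
  ne := by
    intro h
    have hl : r.C.length = 0 := by simpa using congrArg List.length h
    exact r.ne (List.length_eq_zero_iff.mp hl)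
  lenN := by simpa using r.lenN
  lenU := by simpa using r.lenU

/-- Strand `s` is an instance of role item `r` in `Θ`. -/
def InstOf {V : Type} (Θ : SSpaceT V) (s : ℕ) (r : RoleItemT V) : Prop :=
  Θ.IsStrand s ∧
  (Θ.trace s).length ≤ r.C.length ∧
  r.C.take (Θ.trace s).length = Θ.trace s ∧
  (∀ i < (Θ.trace s).length, ∀ t ∈ r.N.getD i ∅, Θ.Non t) ∧
  (∀ i < (Θ.trace s).length, ∀ t ∈ r.U.getD i ∅, Θ.Uniq t (s, i))

/-- `htin(Θ, z, h, r)`: strand `z` has height at least `h` and instantiates `r`. -/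
def Htin {V : Type} (Θ : SSpaceT V) (z h : ℕ) (r : RoleItemT V) : Prop :=
  h ≤ (Θ.trace z).length ∧ InstOf Θ z r

/-- A bundle is a run of the protocol `P` (a set of roles, i.e. of sets of
ground role items) when some role assignment makes each strand an instance of
a role item of its assigned role. -/
def RunOf (Υ : Bundle) (P : Set (Set (RoleItemT Empty))) : Prop :=
  ∃ rl : ℕ → Set (RoleItemT Empty),
    ∀ s, Υ.Θ.IsStrand s → rl s ∈ P ∧ ∃ r ∈ rl s, InstOf Υ.Θ s r
/-- Ground messages of sort A (asymmetric keys). -/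
def SortA (t : Msg) : Prop := t.srt gSo = some .A
/-- Ground messages of sort S (symmetric keys). -/
def SortS (t : Msg) : Prop := t.srt gSo = some .S
/-- Ground messages of sort D (data). -/
def SortD (t : Msg) : Prop := t.srt gSo = some .D

/-- Key inverse on ground messages. -/
def minv (t : Msg) : Msg := MTerm.invOp gSo t

/-- Adversary role item: create an atom out of thin air. -/
def createItem (t : Msg) : RoleItemT Empty where
  C := [.send t]
  N := [∅]
  U := [∅]
  ne := by simp
  lenN := rfl
  lenU := rfl

/-- Adversary role item: pairing. -/
def pairItem (t₀ t₁ : Msg) : RoleItemT Empty where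
  C := [.recv t₀, .recv t₁, .send (.pair t₀ t₁)]
  N := [∅, ∅, ∅]
  U := [∅, ∅, ∅]
  ne := by simp
  lenN := rfl
  lenU := rfl

/-- Adversary role item: separation. -/
def sepItem (t₀ t₁ : Msg) : RoleItemT Empty where
  C := [.recv (.pair t₀ t₁), .send t₀, .send t₁]
  N := [∅, ∅, ∅]
  U := [∅, ∅, ∅]
  ne := by simp
  lenN := rfl
  lenU := rfl

/-- Adversary role item: encryption. -/
def encItem (t k : Msg) : RoleItemT Empty where
  C := [.recv t, .recv k, .send (.enc t k)]
  N := [∅, ∅, ∅]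
  U := [∅, ∅, ∅]
  ne := by simp
  lenN := rfl
  lenU := rfl

/-- Adversary role item: decryption. -/
def decItem (t k : Msg) : RoleItemT Empty where
  C := [.recv (.enc t k), .recv (minv k), .send t]
  N := [∅, ∅, ∅]
  U := [∅, ∅, ∅]
  ne := by simp
  lenN := rfl
  lenU := rfl

def createRole : Set (RoleItemT Empty) :=
  { r | ∃ t : Msg, IsAtomM gSo t ∧ r = createItem t }
def pairRole : Set (RoleItemT Empty) :=
  { r | ∃ t₀ t₁ : Msg, WellSorted gSo t₀ ∧ WellSorted gSo t₁ ∧ r = pairItem t₀ t₁ }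
def sepRole : Set (RoleItemT Empty) :=
  { r | ∃ t₀ t₁ : Msg, WellSorted gSo t₀ ∧ WellSorted gSo t₁ ∧ r = sepItem t₀ t₁ }
def encRole : Set (RoleItemT Empty) :=
  { r | ∃ t k : Msg, WellSorted gSo t ∧ (SortA k ∨ SortS k) ∧ r = encItem t k }
def decRole : Set (RoleItemT Empty) :=
  { r | ∃ t k : Msg, WellSorted gSo t ∧ (SortA k ∨ SortS k) ∧ r = decItem t k }

/-- Initiator role item of the amended Blanchet protocol:
`⟨+{{(s, b)}_{a⁻¹}}_b, −{d}_s⟩`, with `s` assumed uniquely originating at the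
first event. -/
def initItemA (a b s d : Msg) : RoleItemT Empty where
  C := [.send (.enc (.enc (.pair s b) (minv a)) b), .recv (.enc d s)]
  N := [∅, ∅]
  U := [{s}, ∅]
  ne := by simp
  lenN := rfl
  lenU := rfl

/-- Responder role item of the amended Blanchet protocol:
`⟨−{{(s, b)}_{a⁻¹}}_b, +{d}_s⟩`. -/
def respItemA (a b s d : Msg) : RoleItemT Empty where
  C := [.recv (.enc (.enc (.pair s b) (minv a)) b), .send (.enc d s)]
  N := [∅, ∅]
  U := [∅, ∅]
  ne := by simp
  lenN := rfl
  lenU := rfl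

def initRoleA : Set (RoleItemT Empty) :=
  { r | ∃ a b s d : Msg, SortA a ∧ SortA b ∧ SortS s ∧ SortD d ∧ r = initItemA a b s d }
def respRoleA : Set (RoleItemT Empty) :=
  { r | ∃ a b s d : Msg, SortA a ∧ SortA b ∧ SortS s ∧ SortD d ∧ r = respItemA a b s d }

/-- The amended Blanchet protocol, including the adversary roles. -/
def amendedProt : Set (Set (RoleItemT Empty)) :=
  {initRoleA, respRoleA, createRole, pairRole, sepRole, encRole, decRole}


/-! The responder's first message carries the signature `{(s, b)}_{a⁻¹}`, so this signature
originates on some strand of the bundle. Checking the roles one by one: a created atom, a pair,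
or the responder's `{d}_s` is never that signature; separation and decryption only forward
what they have received; and an adversarial encryption would have to receive `a⁻¹`, which would
then originate somewhere, contradicting `non(a⁻¹)`. Hence the signature originates on an
initiator strand, and carrying it forces that strand's parameters to be `a`, `b` and `s`. -/

theorem not_isAtomM_pair {V : Type} {so : V → MSort} {t₀ t₁ : MTerm V} :
    ¬ IsAtomM so (.pair t₀ t₁) := by
  simp only [IsAtomM, MTerm.srt]
  split <;> simp

theorem not_isAtomM_enc {V : Type} {so : V → MSort} {t k : MTerm V} :
    ¬ IsAtomM so (.enc t k) := by
  simp only [IsAtomM, MTerm.srt]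
  split <;> simp

theorem SortA.isAtomM {t : Msg} (h : SortA t) : IsAtomM gSo t := .inl h

theorem SortS.isAtomM {t : Msg} (h : SortS t) : IsAtomM gSo t := .inr (.inl h)

theorem SortD.isAtomM {t : Msg} (h : SortD t) : IsAtomM gSo t := .inr (.inr h)

namespace Carries

variable {V : Type}

theorem pair_iff {u t₀ t₁ : MTerm V} :
    Carries u (.pair t₀ t₁) ↔ u = .pair t₀ t₁ ∨ Carries u t₀ ∨ Carries u t₁ := by
  constructor
  · rintro (_ | h | h)
    exacts [.inl rfl, .inr (.inl h), .inr (.inr h)]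
  · rintro (rfl | h | h)
    exacts [.refl _, .pairL h, .pairR h]

theorem enc_iff {u t k : MTerm V} : Carries u (.enc t k) ↔ u = .enc t k ∨ Carries u t := by
  constructor
  · rintro (_ | _ | _ | h)
    exacts [.inl rfl, .inr h]
  · rintro (rfl | h)
    exacts [.refl _, .encP h]

theorem eq_of_isAtomM {so : V → MSort} {u t : MTerm V} (ht : IsAtomM so t) (h : Carries u t) :
    u = t := by
  cases h with
  | refl => rfl
  | pairL | pairR => exact absurd ht not_isAtomM_pair
  | encP => exact absurd ht not_isAtomM_enc

theorem eq_of_carries_initMsg {s b k s₁ b₁ k₁ : Msg} (hs₁ : IsAtomM gSo s₁)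
    (hb₁ : IsAtomM gSo b₁) (h : Carries (.enc (.pair s b) k) (.enc (.enc (.pair s₁ b₁) k₁) b₁)) :
    s = s₁ ∧ b = b₁ ∧ k = k₁ := by
  simp only [enc_iff, pair_iff, MTerm.enc.injEq, MTerm.pair.injEq,
    reduceCtorEq, false_and, false_or] at h
  rcases h with h | h | h
  · exact ⟨h.1.1, h.1.2, h.2⟩
  · exact absurd (h.eq_of_isAtomM hs₁ ▸ hs₁) not_isAtomM_enc
  · exact absurd (h.eq_of_isAtomM hb₁ ▸ hb₁) not_isAtomM_enc

end Carries

theorem SSpaceT.finite_setOf_isNode {V : Type} (Θ : SSpaceT V) : {n | Θ.IsNode n}.Finite := by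
  refine ((Set.finite_Iio Θ.tr.length).biUnion fun s _ =>
    (Set.finite_Iio (Θ.trace s).length).image (Prod.mk s)).subset ?_
  rintro ⟨s, i⟩ ⟨hs, hi⟩
  exact Set.mem_biUnion hs ⟨i, hi, rfl⟩

namespace Bundle

variable (Υ : Bundle)

instance : IsStrictOrder (ℕ × ℕ) Υ.prec where
  irrefl := Υ.acyclic
  trans _ _ _ := Relation.TransGen.trans

theorem prec_of_lt {s i j : ℕ} (hji : j < i) (hi : Υ.Θ.IsNode (s, i)) :
    Υ.prec (s, j) (s, i) := by
  induction i with
  | zero => omega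
  | succ i ih =>
    have hstep : Υ.edge (s, i) (s, i + 1) := .inl ⟨rfl, rfl, hi⟩
    rcases Nat.lt_succ_iff_lt_or_eq.mp hji with hji | rfl
    · exact .tail (ih hji ⟨hi.1, Nat.lt_of_succ_lt hi.2⟩) hstep
    · exact .single hstep

/-- A `≺`-minimal node carrying `t` is a transmission, since the matching transmission of a
reception precedes it. -/
theorem exists_origAt {t : Msg} {n : ℕ × ℕ} (hn : Υ.Θ.IsNode n) (ht : Carries t (Υ.Θ.evt n).msg) :
    ∃ w i, Υ.Θ.IsStrand w ∧ OrigAt (Υ.Θ.trace w) t i := by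
  set S := {m | Υ.Θ.IsNode m ∧ Carries t (Υ.Θ.evt m).msg}
  have hS : S.Finite := Υ.Θ.finite_setOf_isNode.subset fun _ hm => hm.1
  have hwf := Set.wellFoundedOn_iff.mp (hS.wellFoundedOn (r := Υ.prec))
  obtain ⟨⟨w, i⟩, ⟨hnode, hcarr⟩, hmin₀⟩ := hwf.has_min S ⟨n, hn, ht⟩
  have hmin : ∀ m ∈ S, ¬ Υ.prec m (w, i) := fun m hm hprec => hmin₀ m hm ⟨hprec, hm, hnode, hcarr⟩
  refine ⟨w, i, hnode.1, hnode.2, ?_, hcarr, fun j hj hj' =>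
    hmin (w, j) ⟨⟨hnode.1, hj.trans hnode.2⟩, hj'⟩ (Υ.prec_of_lt hj hnode)⟩
  show (Υ.Θ.evt (w, i)).IsSend
  cases hev : Υ.Θ.evt (w, i) with
  | send => trivial
  | recv t' =>
    obtain ⟨n₀, hcomm, -⟩ := Υ.comm_uniq (w, i) hnode (by rw [hev]; trivial)
    obtain ⟨t'', hsend, hrecv⟩ := Υ.comm_evt _ _ hcomm
    have hmsg : (Υ.Θ.evt n₀).msg = (Υ.Θ.evt (w, i)).msg := by rw [hsend, hrecv]; rfl
    exact hmin n₀ ⟨(Υ.comm_nodes _ _ hcomm).1, hmsg ▸ hcarr⟩ (.single (.inr hcomm))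

end Bundle

namespace InstOf

variable {V : Type} {Θ : SSpaceT V} {w : ℕ} {r : RoleItemT V}

theorem getD_trace (h : InstOf Θ w r) {i : ℕ} (hi : i < (Θ.trace w).length) :
    (Θ.trace w).getD i dEvt = r.C.getD i dEvt := by
  rw [← h.2.2.1]
  simp [List.getD_eq_getElem?_getD, hi]

theorem origAt (h : InstOf Θ w r) {t : MTerm V} {i : ℕ} (ho : OrigAt (Θ.trace w) t i) :
    OrigAt r.C t i := by
  obtain ⟨hi, hsend, hcarr, hfirst⟩ := ho
  rw [h.getD_trace hi] at hsend hcarr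
  exact ⟨hi.trans_le h.2.1, hsend, hcarr, fun j hj => h.getD_trace (hj.trans hi) ▸ hfirst j hj⟩

end InstOf

section RoleItemOrigination

variable {t t₀ t₁ k a b s d u : Msg} {i : ℕ}

theorem origAt_createItem (ht : IsAtomM gSo t) (h : OrigAt (createItem t).C u i) : u = t := by
  obtain ⟨hi, -, hcarr, -⟩ := h
  simp only [createItem, List.length_singleton, Nat.lt_one_iff] at hi
  subst hi
  exact hcarr.eq_of_isAtomM ht

theorem origAt_pairItem (h : OrigAt (pairItem t₀ t₁).C u i) : u = .pair t₀ t₁ := by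
  obtain ⟨hi, hsend, hcarr, hfirst⟩ := h
  simp only [pairItem, List.length_cons, List.length_nil] at hi
  interval_cases i
  · exact hsend.elim
  · exact hsend.elim
  · rcases Carries.pair_iff.mp hcarr with h | h | h
    exacts [h, (hfirst 0 (by norm_num) h).elim, (hfirst 1 (by norm_num) h).elim]

theorem not_origAt_sepItem : ¬ OrigAt (sepItem t₀ t₁).C u i := by
  rintro ⟨hi, hsend, hcarr, hfirst⟩
  simp only [sepItem, List.length_cons, List.length_nil] at hi
  interval_cases i
  · exact hsend.elim
  · exact hfirst 0 (by norm_num) (.pairL hcarr)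
  · exact hfirst 0 (by norm_num) (.pairR hcarr)

theorem origAt_encItem (h : OrigAt (encItem t k).C u i) : u = .enc t k ∧ i = 2 := by
  obtain ⟨hi, hsend, hcarr, hfirst⟩ := h
  simp only [encItem, List.length_cons, List.length_nil] at hi
  interval_cases i
  · exact hsend.elim
  · exact hsend.elim
  · rcases Carries.enc_iff.mp hcarr with h | h
    exacts [⟨h, rfl⟩, (hfirst 0 (by norm_num) h).elim]

theorem not_origAt_decItem : ¬ OrigAt (decItem t k).C u i := by
  rintro ⟨hi, hsend, hcarr, hfirst⟩
  simp only [decItem, List.length_cons, List.length_nil] at hi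
  interval_cases i
  · exact hsend.elim
  · exact hsend.elim
  · exact hfirst 0 (by norm_num) (.encP hcarr)

theorem origAt_initItemA (h : OrigAt (initItemA a b s d).C u i) :
    Carries u (.enc (.enc (.pair s b) (minv a)) b) := by
  obtain ⟨hi, hsend, hcarr, -⟩ := h
  simp only [initItemA, List.length_cons, List.length_nil] at hi
  interval_cases i
  · exact hcarr
  · exact hsend.elim

theorem origAt_respItemA (hd : IsAtomM gSo d) (h : OrigAt (respItemA a b s d).C u i) :
    u = .enc d s ∨ u = d := by
  obtain ⟨hi, hsend, hcarr, -⟩ := h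
  simp only [respItemA, List.length_cons, List.length_nil] at hi
  interval_cases i
  · exact hsend.elim
  · exact (Carries.enc_iff.mp hcarr).imp_right (Carries.eq_of_isAtomM hd)

end RoleItemOrigination

theorem RunOf.initiator_of_origAt_sig {Υ : Bundle} (hrun : RunOf Υ amendedProt) {a b s : Msg}
    (hna : Υ.Θ.Non (minv a)) {w i : ℕ} (hw : Υ.Θ.IsStrand w)
    (ho : OrigAt (Υ.Θ.trace w) (.enc (.pair s b) (minv a)) i) :
    ∃ d₀, SortD d₀ ∧ Htin Υ.Θ w 1 (initItemA a b s d₀) := by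
  obtain ⟨rl, hrl⟩ := hrun
  obtain ⟨hrole, r, hr, hinst⟩ := hrl w hw
  have hor := hinst.origAt ho
  simp only [amendedProt, Set.mem_insert_iff, Set.mem_singleton_iff] at hrole
  rcases hrole with h | h | h | h | h | h | h <;> rw [h] at hr
  · obtain ⟨a₁, b₁, s₁, d₁, -, hb₁, hs₁, hd₁, rfl⟩ := hr
    obtain ⟨rfl, rfl, hk⟩ := (origAt_initItemA hor).eq_of_carries_initMsg
      hs₁.isAtomM hb₁.isAtomM
    have hitem : initItemA a b s d₁ = initItemA a₁ b s d₁ := by simp only [initItemA, hk]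
    exact ⟨d₁, hd₁, Nat.one_le_of_lt ho.1, hitem ▸ hinst⟩
  · obtain ⟨_, _, _, d₁, -, -, -, hd₁, rfl⟩ := hr
    rcases origAt_respItemA hd₁.isAtomM hor with h | rfl
    · exact absurd ((MTerm.enc.inj h).1 ▸ hd₁.isAtomM) not_isAtomM_pair
    · exact (not_isAtomM_enc hd₁.isAtomM).elim
  · obtain ⟨t, ht, rfl⟩ := hr
    exact absurd (origAt_createItem ht hor ▸ ht) not_isAtomM_enc
  · obtain ⟨t₀, t₁, -, -, rfl⟩ := hr
    exact nomatch origAt_pairItem hor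
  · obtain ⟨t₀, t₁, -, -, rfl⟩ := hr
    exact (not_origAt_sepItem hor).elim
  · obtain ⟨t, k, -, -, rfl⟩ := hr
    obtain ⟨hu, rfl⟩ := origAt_encItem hor
    obtain ⟨-, rfl⟩ := MTerm.enc.inj hu
    have hnode : Υ.Θ.IsNode (w, 1) := ⟨hw, one_lt_two.trans ho.1⟩
    obtain ⟨w', i', hw', ho'⟩ := Υ.exists_origAt hnode <| by
      rw [SSpaceT.evt, hinst.getD_trace hnode.2]
      exact .refl _
    exact (hna w' hw' i' ho').elim
  · obtain ⟨t, k, -, -, rfl⟩ := hr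
    exact (not_origAt_decItem hor).elim

theorem amended_blanchet_authentication_general (Υ : Bundle)
    (hrun : RunOf Υ amendedProt)
    (a b s d : Msg)
    (z : ℕ)
    (hresp : Htin Υ.Θ z 2 (respItemA a b s d))
    (hna : Υ.Θ.Non (minv a)) :
    ∃ (d₀ : Msg) (z₀ : ℕ),
      SortD d₀ ∧ Υ.Θ.IsStrand z₀ ∧ Htin Υ.Θ z₀ 1 (initItemA a b s d₀) := by
  obtain ⟨hlen, hinst⟩ := hresp
  have hnode : Υ.Θ.IsNode (z, 0) := ⟨hinst.1, lt_of_lt_of_le two_pos hlen⟩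
  have hsig : Carries (.enc (.pair s b) (minv a)) (Υ.Θ.evt (z, 0)).msg := by
    rw [SSpaceT.evt, hinst.getD_trace hnode.2]
    exact .encP (.refl _)
  obtain ⟨w, i, hw, ho⟩ := Υ.exists_origAt hnode hsig
  obtain ⟨d₀, hd₀, hinit⟩ := hrun.initiator_of_origAt_sig hna hw ho
  exact ⟨d₀, w, hd₀, hw, hinit⟩

/-- The amended Blanchet protocol achieves its authentication goal: in every
run of the protocol, a full-length responder strand with `a⁻¹` and `b⁻¹`
non-originating guarantees an initiator strand of height 1 that agrees on the
keys `a`, `b` and the symmetric key `s`. -/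
theorem amended_blanchet_authentication (Υ : Bundle)
    (hrun : RunOf Υ amendedProt)
    (a b s d : Msg) (ha : SortA a) (hb : SortA b) (hs : SortS s) (hd : SortD d)
    (z : ℕ) (hz : Υ.Θ.IsStrand z)
    (hresp : Htin Υ.Θ z 2 (respItemA a b s d))
    (hna : Υ.Θ.Non (minv a)) (hnb : Υ.Θ.Non (minv b)) :
    ∃ (d₀ : Msg) (z₀ : ℕ),
      SortD d₀ ∧ Υ.Θ.IsStrand z₀ ∧ Htin Υ.Θ z₀ 1 (initItemA a b s d₀) :=
  amended_blanchet_authentication_general Υ hrun a b s d z hresp hna
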